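/- arXiv:2008.07803 — 3 statements merged into one kernel-verified Lean document; each statement's English description precedes it below -/
import Mathlib

section
/- With notation as in the previous statement, for any r ≥ 1 and T > 0 there exists C < ∞ (depending only on r, T, ‖h‖_∞, d_y) such that E[(E[Z_T | Y_T-σ-algebra])^{-r}] ≤ C, where the conditional expectation is taken with respect to the σ-algebra generated by {Y_s, 0 ≤ s ≤ T}. -/
/-!
Conditional Jensen for the convex function `x ↦ x ^ (-r)` gives
`(E[Z | 𝒢]) ^ (-r) ≤ E[Z ^ (-r) | 𝒢]`, so it suffices to bound `E[Z ^ (-r)]`. Now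
`Z ^ (-r) = exp (-r S - r ^ 2 / 2 V) * exp ((r ^ 2 + r) / 2 V)`, where the first factor has
expectation one and `V ≤ ‖h‖²_∞ T`; hence `C = exp ((r ^ 2 + r) / 2 ‖h‖²_∞ T)`.
-/

open MeasureTheory Filter Topology Set Real

lemma convexOn_rpow_neg {r : ℝ} (hr : 0 ≤ r) :
    ConvexOn ℝ (Ioi 0) fun x : ℝ ↦ x ^ (-r) := by
  have hlog : ConvexOn ℝ (Ioi 0) fun x : ℝ ↦ r • -log x :=
    strictConcaveOn_log_Ioi.concaveOn.neg.smul hr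
  have himage : Convex ℝ ((fun x : ℝ ↦ r • -log x) '' Ioi 0) := by
    rw [convex_iff_isPreconnected]
    exact isPreconnected_Ioi.image _
      ((continuousOn_log.mono fun x (hx : 0 < x) ↦ hx.ne').neg.const_smul r)
  refine ((convexOn_exp.subset (subset_univ _) himage).comp hlog
    (exp_monotone.monotoneOn _)).congr fun x (hx : 0 < x) ↦ ?_
  simp [rpow_def_of_pos hx, mul_comm]

section CondExp

variable {Ω : Type*} {m mΩ : MeasurableSpace Ω} {P : Measure Ω} [IsFiniteMeasure P]
  {Z : Ω → ℝ} {r : ℝ}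

-- Jensen needs a closed domain on which `x ↦ x ^ (-r)` is convex, hence the shift by `ε`.
lemma condExp_add_const_rpow_neg_le (hm : m ≤ mΩ) (hr : 0 ≤ r) {ε : ℝ} (hε : 0 < ε)
    (hZ_pos : ∀ᵐ ω ∂P, 0 < Z ω) (hZ : Integrable Z P)
    (hZr : Integrable (fun ω ↦ Z ω ^ (-r)) P) :
    ∀ᵐ ω ∂P, (P[Z|m] ω + ε) ^ (-r) ≤ P[fun ω ↦ Z ω ^ (-r)|m] ω := by
  have hZε : Integrable (fun ω ↦ Z ω + ε) P := hZ.add (integrable_const ε)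
  have hZε_le : ∀ᵐ ω ∂P, (Z ω + ε) ^ (-r) ≤ Z ω ^ (-r) := hZ_pos.mono fun ω hω ↦
    rpow_le_rpow_of_nonpos hω (le_add_of_nonneg_right hε.le) (neg_nonpos.2 hr)
  have hZεr : Integrable (fun ω ↦ (Z ω + ε) ^ (-r)) P := by
    refine (integrable_const (ε ^ (-r))).mono'
      (hZε.aemeasurable.pow_const _).aestronglyMeasurable ?_
    filter_upwards [hZ_pos] with ω hω
    rw [norm_of_nonneg (by positivity)]
    exact rpow_le_rpow_of_nonpos hε (le_add_of_nonneg_left hω.le) (neg_nonpos.2 hr)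
  have hcont : ContinuousOn (fun x : ℝ ↦ x ^ (-r)) (Ici ε) := fun x (hx : ε ≤ x) ↦
    (continuousAt_rpow_const x (-r) (Or.inl (hε.trans_le hx).ne')).continuousWithinAt
  have hjensen :=
    ((convexOn_rpow_neg hr).subset (Ici_subset_Ioi.2 hε) (convex_Ici ε)).map_condExp_le hm
      hcont.lowerSemicontinuousOn (hZ_pos.mono fun ω hω ↦ le_add_of_nonneg_left hω.le)
    isClosed_Ici hZε hZεr
  have hadd : P[fun ω ↦ Z ω + ε|m] =ᵐ[P] fun ω ↦ P[Z|m] ω + ε := by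
    refine (condExp_add hZ (integrable_const ε) m).trans ?_
    rw [condExp_const hm]
    rfl
  filter_upwards [hjensen, hadd, condExp_mono hZεr hZr hZε_le] with ω hjensen hadd hmono
  simp only [Function.comp_apply, hadd] at hjensen
  exact hjensen.trans hmono

lemma rpow_neg_condExp_le (hm : m ≤ mΩ) (hr : 0 < r) (hZ_pos : ∀ᵐ ω ∂P, 0 < Z ω)
    (hZ : Integrable Z P) (hZr : Integrable (fun ω ↦ Z ω ^ (-r)) P) :
    ∀ᵐ ω ∂P, P[Z|m] ω ^ (-r) ≤ P[fun ω ↦ Z ω ^ (-r)|m] ω := by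
  have hshift : ∀ᵐ ω ∂P, ∀ n : ℕ,
      (P[Z|m] ω + 1 / (n + 1)) ^ (-r) ≤ P[fun ω ↦ Z ω ^ (-r)|m] ω :=
    ae_all_iff.2 fun _ ↦
      condExp_add_const_rpow_neg_le hm hr.le Nat.one_div_pos_of_nat hZ_pos hZ hZr
  have hg_nonneg : 0 ≤ᵐ[P] P[Z|m] := condExp_nonneg (hZ_pos.mono fun _ h ↦ h.le)
  have hZr_nonneg : 0 ≤ᵐ[P] P[fun ω ↦ Z ω ^ (-r)|m] :=
    condExp_nonneg (hZ_pos.mono fun _ h ↦ rpow_nonneg h.le _)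
  filter_upwards [hshift, hg_nonneg, hZr_nonneg] with ω hshift hg hZr
  rcases (show (0 : ℝ) ≤ P[Z|m] ω from hg).eq_or_lt with hg | hg
  · rw [← hg, zero_rpow (neg_ne_zero.2 hr.ne')]
    exact hZr
  · have hlim : Tendsto (fun n : ℕ ↦ P[Z|m] ω + 1 / (n + 1)) atTop (𝓝 (P[Z|m] ω)) := by
      simpa using tendsto_const_nhds.add (tendsto_one_div_add_atTop_nhds_zero_nat (𝕜 := ℝ))
    exact le_of_tendsto' ((continuousAt_rpow_const _ _ (Or.inl hg.ne')).tendsto.comp hlim) hshift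

end CondExp

lemma exp_sub_half_rpow_neg_le {s v K r : ℝ} (hr : 0 ≤ r) (hv : v ≤ K) :
    exp (s - v / 2) ^ (-r) ≤ exp ((r ^ 2 + r) / 2 * K) * exp (-r * s - (-r) ^ 2 / 2 * v) := by
  rw [← exp_mul, ← exp_add, exp_le_exp]
  nlinarith [mul_nonneg (by positivity : 0 ≤ (r ^ 2 + r) / 2) (sub_nonneg.2 hv)]

section ExpWeight

variable {Ω : Type*} {mΩ : MeasurableSpace Ω} {P : Measure Ω} {S V : Ω → ℝ} {K r : ℝ}

lemma integrable_exp_sub_half_rpow_neg (hr : 0 ≤ r) (hVK : ∀ ω, V ω ≤ K)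
    (hW : ∫ ω, exp (-r * S ω - (-r) ^ 2 / 2 * V ω) ∂P = 1)
    (hZ : AEStronglyMeasurable (fun ω ↦ exp (S ω - V ω / 2)) P) :
    Integrable (fun ω ↦ exp (S ω - V ω / 2) ^ (-r)) P :=
  ((Integrable.of_integral_ne_zero (hW ▸ one_ne_zero)).const_mul _).mono'
    (hZ.aemeasurable.pow_const _).aestronglyMeasurable <| .of_forall fun ω ↦
      (norm_of_nonneg (by positivity)).trans_le (exp_sub_half_rpow_neg_le hr (hVK ω))

lemma integral_exp_sub_half_rpow_neg_le (hr : 0 ≤ r) (hVK : ∀ ω, V ω ≤ K)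
    (hW : ∫ ω, exp (-r * S ω - (-r) ^ 2 / 2 * V ω) ∂P = 1) :
    ∫ ω, exp (S ω - V ω / 2) ^ (-r) ∂P ≤ exp ((r ^ 2 + r) / 2 * K) :=
  calc ∫ ω, exp (S ω - V ω / 2) ^ (-r) ∂P
      ≤ ∫ ω, exp ((r ^ 2 + r) / 2 * K) * exp (-r * S ω - (-r) ^ 2 / 2 * V ω) ∂P :=
        integral_mono_of_nonneg (.of_forall fun ω ↦ by positivity)
          ((Integrable.of_integral_ne_zero (hW ▸ one_ne_zero)).const_mul _)
          (.of_forall fun ω ↦ exp_sub_half_rpow_neg_le hr (hVK ω))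
    _ = exp ((r ^ 2 + r) / 2 * K) := by rw [integral_const_mul, hW, mul_one]

end ExpWeight

lemma setIntegral_sq_norm_le {α E : Type*} [MeasurableSpace α] [NormedAddCommGroup E]
    {μ : Measure α} {s : Set α} {f : α → E} {c : ℝ} (hs : μ s < ⊤)
    (hf : ∀ x ∈ s, ‖f x‖ ≤ c) :
    ∫ x in s, ‖f x‖ ^ 2 ∂μ ≤ c ^ 2 * μ.real s :=
  (le_abs_self _).trans <| (norm_eq_abs _).symm.trans_le <|
    norm_setIntegral_le_of_norm_le_const (f := fun x ↦ ‖f x‖ ^ 2) hs fun x hx ↦ by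
    rw [norm_pow, norm_norm]
    exact pow_le_pow_left₀ (norm_nonneg _) (hf x hx) 2

theorem stmt3_general (dx dy : ℕ) (T Ch r : ℝ) (hT : 0 < T) (hr : 1 ≤ r) :
    ∃ C : ℝ, ∀ (Ω : Type) [mΩ : MeasurableSpace Ω] (P : Measure Ω)
      [IsProbabilityMeasure P]
      (h : EuclideanSpace ℝ (Fin dx) → EuclideanSpace ℝ (Fin dy)),
      (∀ x, ‖h x‖ ≤ Ch) → Measurable h →
      ∀ (X : ℝ → Ω → EuclideanSpace ℝ (Fin dx)), Measurable (Function.uncurry X) →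
      ∀ (S V Z : Ω → ℝ), Measurable S →
        (∀ ω, V ω = ∫ s in Set.Ioc (0:ℝ) T, ‖h (X s ω)‖ ^ 2) →
        (∀ c : ℝ, ∫ ω, Real.exp (c * S ω - c ^ 2 / 2 * V ω) ∂P = 1) →
        (∀ ω, Z ω = Real.exp (S ω - V ω / 2)) →
      ∀ (𝒢 : MeasurableSpace Ω), 𝒢 ≤ mΩ →
        ∫ ω, ((P[Z|𝒢]) ω) ^ (-r) ∂P ≤ C := by
  refine ⟨exp ((r ^ 2 + r) / 2 * (Ch ^ 2 * T)), ?_⟩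
  intro Ω mΩ P _ h hh _ X _ S V Z _ hV hmgf hZ
  obtain rfl : Z = fun ω ↦ exp (S ω - V ω / 2) := funext hZ
  have hr₀ : 0 < r := zero_lt_one.trans_le hr
  have hVK : ∀ ω, V ω ≤ Ch ^ 2 * T := fun ω ↦ by
    have := setIntegral_sq_norm_le (f := fun s ↦ h (X s ω)) (s := Ioc 0 T) (μ := volume)
      measure_Ioc_lt_top fun s _ ↦ hh _
    rwa [volume_real_Ioc_of_le hT.le, sub_zero, ← hV] at this
  have hZ_int : Integrable (fun ω ↦ exp (S ω - V ω / 2)) P :=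
    .of_integral_ne_zero (by simpa [div_eq_inv_mul] using (hmgf 1).trans_ne one_ne_zero)
  have hZr_int := integrable_exp_sub_half_rpow_neg hr₀.le hVK (hmgf (-r)) hZ_int.1
  -- introduced only now: once in context, `𝒢` is picked up as the `MeasurableSpace` instance
  intro 𝒢 h𝒢
  calc ∫ ω, P[fun ω ↦ exp (S ω - V ω / 2)|𝒢] ω ^ (-r) ∂P
      ≤ ∫ ω, P[fun ω ↦ exp (S ω - V ω / 2) ^ (-r)|𝒢] ω ∂P :=
        integral_mono_of_nonneg
          ((condExp_nonneg (.of_forall fun ω ↦ (exp_pos _).le)).mono fun _ h ↦ rpow_nonneg h _)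
          integrable_condExp
          (rpow_neg_condExp_le h𝒢 hr₀ (.of_forall fun _ ↦ exp_pos _) hZ_int hZr_int)
    _ = ∫ ω, exp (S ω - V ω / 2) ^ (-r) ∂P := integral_condExp h𝒢
    _ ≤ _ := integral_exp_sub_half_rpow_neg_le hr₀.le hVK (hmgf (-r))

/-- Negative moment bound for the conditional expectation of the Girsanov weight:
with `Z_T` as in the previous statement and `𝒢 = σ({Y_s}_{0≤s≤T})`, for any `r ≥ 1`, `T > 0`
there is `C < ∞` (depending only on `r, T, ‖h‖_∞, d_y`) with
`E[(E[Z_T | 𝒢])^{-r}] ≤ C`. -/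
theorem stmt3 (dx dy : ℕ) (T Ch r : ℝ) (hT : 0 < T) (hCh : 0 ≤ Ch) (hr : 1 ≤ r) :
    ∃ C : ℝ, ∀ (Ω : Type) [mΩ : MeasurableSpace Ω] (P : Measure Ω)
      [IsProbabilityMeasure P]
      (h : EuclideanSpace ℝ (Fin dx) → EuclideanSpace ℝ (Fin dy)),
      (∀ x, ‖h x‖ ≤ Ch) → Measurable h →
      ∀ (X : ℝ → Ω → EuclideanSpace ℝ (Fin dx)), Measurable (Function.uncurry X) →
      ∀ (S V Z : Ω → ℝ), Measurable S →
        (∀ ω, V ω = ∫ s in Set.Ioc (0:ℝ) T, ‖h (X s ω)‖ ^ 2) →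
        (∀ c : ℝ, ∫ ω, Real.exp (c * S ω - c ^ 2 / 2 * V ω) ∂P = 1) →
        (∀ ω, Z ω = Real.exp (S ω - V ω / 2)) →
      ∀ (𝒢 : MeasurableSpace Ω), 𝒢 ≤ mΩ →
        ∫ ω, ((P[Z|𝒢]) ω) ^ (-r) ∂P ≤ C :=
  stmt3_general dx dy T Ch r hT hr
end

section
/- Time-reversal (backward decomposition) of a Feynman–Kac path measure: let η₀ be a probability measure on E, M a Markov kernel on E, and G_p : E × E → (0, ∞) bounded potentials with densities m(u, u') of M(u, ·) with respect to a reference measure ν. Define the smoothing measure Q_T(d(u₀,...,u_T)) ∝ (∏_{p=0}^T G_p(u_{p−1}, u_p)) η₀(du₀) ∏_{p=1}^T M(u_{p−1}, du_p), and let π_k denote the marginal of (the k-step Feynman–Kac flow) on the k-th coordinate. Then Q_T(d(u₀,...,u_T)) = π_T(du_T) ∏_{k=1}^{T} B_k(u_k, du_{k−1}), where B_k(u_k, du_{k−1}) := π_{k−1}(du_{k−1}) G_k(u_{k−1}, u_k) m(u_{k−1}, u_k) / ∫ π_{k−1}(du) G_k(u, u_k) m(u, u_k). -/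
open MeasureTheory
open scoped ENNReal

namespace Stmt9Aux

variable {α β : Type*} [MeasurableSpace α] [MeasurableSpace β]

def pad {E : Type*} (ustar : E) (k : ℕ) (u : Fin (k + 1) → E) (p : ℕ) : E :=
  if h : p < k + 1 then u ⟨p, h⟩ else ustar

lemma wd_map_equiv (e : α ≃ᵐ β) (μ : Measure α) (f : β → ℝ≥0∞) :
    (μ.map e).withDensity f = (μ.withDensity fun a => f (e a)).map e := by
  ext s hs
  rw [withDensity_apply _ hs, Measure.restrict_map e.measurable hs, lintegral_map_equiv,
    Measure.map_apply e.measurable hs, withDensity_apply _ (e.measurable hs)]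

lemma wd_fst_prod (μ : Measure α) (ρ : Measure β) [SFinite μ] [SFinite ρ]
    {f : α → ℝ≥0∞} (hf : Measurable f) :
    (μ.withDensity f).prod ρ = (μ.prod ρ).withDensity fun p => f p.1 := by
  ext s hs
  rw [Measure.prod_apply hs, withDensity_apply _ hs,
    lintegral_withDensity_eq_lintegral_mul μ hf (measurable_measure_prodMk_left hs),
    ← lintegral_indicator hs]
  have hmf : Measurable fun p : α × β => f p.1 := hf.comp measurable_fst
  rw [lintegral_prod _ ((hmf.indicator hs).aemeasurable)]
  refine lintegral_congr fun x => ?_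
  have h1 : (fun y => s.indicator (fun p : α × β => f p.1) (x, y))
      = fun y => (Prod.mk x ⁻¹' s).indicator (fun _ => f x) y := by
    funext y
    by_cases h : (x, y) ∈ s <;> simp [Set.indicator, h, Set.mem_preimage]
  rw [h1, lintegral_indicator (measurable_prodMk_left hs), setLIntegral_const]
  simp [mul_comm]

lemma prod_wd_snd (μ : Measure α) (ρ : Measure β) [SigmaFinite μ] [SFinite ρ]
    {g : β → ℝ≥0∞} (hg : Measurable g) [SigmaFinite (ρ.withDensity g)] :
    μ.prod (ρ.withDensity g) = (μ.prod ρ).withDensity fun p => g p.2 := by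
  refine (Measure.prod_eq fun s t hs ht => ?_)
  have hmg : Measurable fun p : α × β => g p.2 := hg.comp measurable_snd
  rw [withDensity_apply _ (hs.prod ht), ← Measure.prod_restrict,
    lintegral_prod _ hmg.aemeasurable]
  have h2 : ∀ x : α, ∫⁻ y, g y ∂ρ.restrict t = (ρ.withDensity g) t := fun _ =>
    (withDensity_apply _ ht).symm
  rw [lintegral_congr h2, lintegral_const, Measure.restrict_apply_univ, mul_comm]

lemma map_fst_wd (μ : Measure α) (ρ : Measure β) [SFinite μ] [SFinite ρ]
    {g : α × β → ℝ≥0∞} (hg : Measurable g) :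
    ((μ.prod ρ).withDensity g).map Prod.fst = μ.withDensity fun x => ∫⁻ y, g (x, y) ∂ρ := by
  ext s hs
  rw [Measure.map_apply measurable_fst hs, withDensity_apply _ (measurable_fst hs),
    withDensity_apply _ hs]
  have h1 : Prod.fst ⁻¹' s = s ×ˢ (Set.univ : Set β) := by ext p; simp
  rw [h1, ← Measure.prod_restrict, Measure.restrict_univ, lintegral_prod _ hg.aemeasurable]

lemma smul_prod_left (c : ℝ≥0∞) (μ : Measure α) (ρ : Measure β) [SFinite μ] [SFinite ρ] :
    (c • μ).prod ρ = c • μ.prod ρ := by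
  ext s hs
  rw [Measure.prod_apply hs, Measure.smul_apply, Measure.prod_apply hs, lintegral_smul_measure,
    smul_eq_mul]

lemma smul_prod_right (c : ℝ≥0∞) (μ : Measure α) (ρ : Measure β) [SFinite μ] [SFinite ρ]
    [SFinite (c • ρ)] :
    μ.prod (c • ρ) = c • μ.prod ρ := by
  ext s hs
  rw [Measure.prod_apply hs, Measure.smul_apply, Measure.prod_apply hs]
  simp_rw [Measure.smul_apply, smul_eq_mul]
  rw [lintegral_const_mul c (measurable_measure_prodMk_left hs)]

end Stmt9Aux

open Stmt9Aux

set_option maxHeartbeats 2000000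

/-- Time-reversal (backward decomposition) of a Feynman–Kac path measure: the smoothing
measure `Q_T ∝ (∏_p G_p(u_{p−1},u_p)) η₀(du₀) ∏_p m(u_{p−1},u_p) ν(du_p)` factorizes as the
terminal filter `π_T` propagated backward through the kernels
`B_k(u_k, du_{k−1}) = π_{k−1}(du_{k−1}) G_k(u_{k−1},u_k) m(u_{k−1},u_k) / Z_k(u_k)`; i.e. `Q_T`
equals the product measure `⊗_k π_k` reweighted by `∏_{k=1}^T G_k m / Z_k`. -/
theorem stmt9 {E : Type*} [MeasurableSpace E]
    (ν : Measure E) [SigmaFinite ν] (η₀ : Measure E) [IsProbabilityMeasure η₀]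
    (m : E → E → ℝ) (hm : Measurable (Function.uncurry m)) (hmpos : ∀ u u', 0 < m u u')
    (hmdens : ∀ u, ∫ u', m u u' ∂ν = 1)
    (G : ℕ → E → E → ℝ) (hGm : ∀ p, Measurable (Function.uncurry (G p)))
    (hGpos : ∀ p u u', 0 < G p u u') (hGb : ∃ Cg, ∀ p u u', G p u u' ≤ Cg)
    (ustar : E) (T : ℕ)
    -- `ext u` extends a finite path `u : Fin (k+1) → E` to `ℕ → E` (constant `ustar` beyond)
    (ext : (k : ℕ) → (Fin (k + 1) → E) → ℕ → E)
    (hext : ∀ (k : ℕ) (u : Fin (k + 1) → E) (p : ℕ),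
      ext k u p = if h : p < k + 1 then u ⟨p, h⟩ else ustar)
    -- unnormalized Feynman–Kac density of the path `(u₀,…,u_k)`
    (D : (k : ℕ) → (Fin (k + 1) → E) → ℝ)
    (hD : ∀ (k : ℕ) (u : Fin (k + 1) → E),
      D k u = (∏ p ∈ Finset.range (k + 1),
          G p (if p = 0 then ustar else ext k u (p - 1)) (ext k u p)) *
        ∏ p ∈ Finset.Icc 1 k, m (ext k u (p - 1)) (ext k u p))
    (base : (k : ℕ) → Measure (Fin (k + 1) → E))
    (hbase : ∀ k, base k = Measure.pi (fun i : Fin (k + 1) => if i.val = 0 then η₀ else ν))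
    (Qraw : (k : ℕ) → Measure (Fin (k + 1) → E))
    (hQraw : ∀ k, Qraw k = (base k).withDensity (fun u => ENNReal.ofReal (D k u)))
    (hfin : ∀ k, 0 < Qraw k Set.univ ∧ Qraw k Set.univ < ⊤)
    -- normalized smoothing law and its terminal-coordinate marginal (the filter)
    (Q : (k : ℕ) → Measure (Fin (k + 1) → E))
    (hQ : ∀ k, Q k = (Qraw k Set.univ)⁻¹ • Qraw k)
    (pifil : ℕ → Measure E)
    (hpifil : ∀ k, pifil k = (Q k).map (fun u => u (Fin.last k)))
    -- normalizing constant of the backward kernel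
    (Zden : ℕ → E → ℝ)
    (hZden : ∀ k xnew, Zden k xnew = ∫ u, G k u xnew * m u xnew ∂(pifil (k - 1))) :
    Q T = (Measure.pi (fun i : Fin (T + 1) => pifil i.val)).withDensity
      (fun u => ENNReal.ofReal (∏ k ∈ Finset.Icc 1 T,
        G k (ext T u (k - 1)) (ext T u k) * m (ext T u (k - 1)) (ext T u k)
          / Zden k (ext T u k))) := by
  classical
  obtain ⟨Cg, hCg⟩ := hGb
  have hCg0 : (0 : ℝ) < Cg := lt_of_lt_of_le (hGpos 0 ustar ustar) (hCg 0 ustar ustar)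
  have hc0 : ∀ k, Qraw k Set.univ ≠ 0 := fun k => (hfin k).1.ne'
  have hcT : ∀ k, Qraw k Set.univ ≠ ⊤ := fun k => (hfin k).2.ne
  haveI hQrawfin : ∀ j, IsFiniteMeasure (Qraw j) := fun j => ⟨(hfin j).2⟩
  have hQprob : ∀ k, IsProbabilityMeasure (Q k) := by
    intro k
    constructor
    rw [hQ k, Measure.smul_apply, smul_eq_mul, ENNReal.inv_mul_cancel (hc0 k) (hcT k)]
  have hpifprob : ∀ k, IsProbabilityMeasure (pifil k) := by
    intro k
    haveI := hQprob k
    rw [hpifil k]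
    exact Measure.isProbabilityMeasure_map (measurable_pi_apply _).aemeasurable
  have hpe : ∀ (k : ℕ) (u : Fin (k + 1) → E) (p : ℕ), ext k u p = pad ustar k u p :=
    fun k u p => by rw [hext k u p]; rfl
  simp only [hpe]
  -- measurability of `pad` coordinates
  have mpad : ∀ (k p : ℕ), Measurable fun u : Fin (k + 1) → E => pad ustar k u p := by
    intro k p
    rcases Nat.lt_or_ge p (k + 1) with h | h
    · have h1 : (fun u : Fin (k + 1) → E => pad ustar k u p) = fun u => u ⟨p, h⟩ := by
        funext u; simp [pad, h]
      rw [h1]; exact measurable_pi_apply _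
    · have h1 : (fun u : Fin (k + 1) → E => pad ustar k u p) = fun _ => ustar := by
        funext u; simp [pad, Nat.not_lt.mpr h]
      rw [h1]; exact measurable_const
  -- measurability of the unnormalized densities
  have mD : ∀ k, Measurable fun u : Fin (k + 1) → E => ENNReal.ofReal (D k u) := by
    intro k
    have h1 : (fun u : Fin (k + 1) → E => D k u) =
        fun u => (∏ p ∈ Finset.range (k + 1),
            G p (if p = 0 then ustar else pad ustar k u (p - 1)) (pad ustar k u p)) *
          ∏ p ∈ Finset.Icc 1 k, m (pad ustar k u (p - 1)) (pad ustar k u p) := by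
      funext u; rw [hD k u]; simp only [hpe]
    have h2 : Measurable fun u : Fin (k + 1) → E => D k u := by
      rw [h1]
      refine Measurable.mul ?_ ?_
      · refine Finset.measurable_prod _ fun p _ => ?_
        have hfirst : Measurable fun u : Fin (k + 1) → E =>
            (if p = 0 then ustar else pad ustar k u (p - 1)) := by
          split_ifs
          · exact measurable_const
          · exact mpad k _
        exact (hGm p).comp (hfirst.prodMk (mpad k p))
      · refine Finset.measurable_prod _ fun p _ => ?_
        exact hm.comp ((mpad k _).prodMk (mpad k p))
    exact h2.ennreal_ofReal
  -- measurability of the backward normalizers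
  have mZ : ∀ j, Measurable (Zden j) := by
    intro j
    have h1 : Zden j = fun x => ∫ u, G j u x * m u x ∂(pifil (j - 1)) := funext (hZden j)
    rw [h1]
    haveI := hpifprob (j - 1)
    have hmeas : Measurable fun q : E × E => G j q.2 q.1 * m q.2 q.1 :=
      ((hGm j).comp (measurable_snd.prodMk measurable_fst)).mul
        (hm.comp (measurable_snd.prodMk measurable_fst))
    exact (hmeas.stronglyMeasurable.integral_prod_right').measurable
  -- measurability of the backward densities
  have mF : ∀ k, Measurable fun u : Fin (k + 1) → E => ENNReal.ofReal
      (∏ j ∈ Finset.Icc 1 k,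
        G j (pad ustar k u (j - 1)) (pad ustar k u j) * m (pad ustar k u (j - 1)) (pad ustar k u j)
          / Zden j (pad ustar k u j)) := by
    intro k
    refine Measurable.ennreal_ofReal ?_
    refine Finset.measurable_prod _ fun j _ => ?_
    refine Measurable.div ?_ ((mZ j).comp (mpad k j))
    exact ((hGm j).comp ((mpad k _).prodMk (mpad k j))).mul
      (hm.comp ((mpad k _).prodMk (mpad k j)))
  -- integrability facts about `m`
  have hmint : ∀ y, Integrable (m y) ν := fun y => integrable_of_integral_eq_one (hmdens y)
  have hm1 : ∀ y, ∫⁻ x, ENNReal.ofReal (m y x) ∂ν = 1 := by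
    intro y
    have h1 := ofReal_integral_eq_lintegral_ofReal (hmint y)
      (Filter.Eventually.of_forall fun x => (hmpos y x).le)
    rw [hmdens y, ENNReal.ofReal_one] at h1
    exact h1.symm
  induction T with
  | zero =>
      have hIcc : (Finset.Icc 1 0 : Finset ℕ) = ∅ := by decide
      have h1 : (fun u : Fin 1 → E => ENNReal.ofReal (∏ k ∈ Finset.Icc 1 0,
          G k (pad ustar 0 u (k - 1)) (pad ustar 0 u k) * m (pad ustar 0 u (k - 1)) (pad ustar 0 u k)
            / Zden k (pad ustar 0 u k))) = (1 : (Fin 1 → E) → ℝ≥0∞) := by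
        funext u; simp [hIcc]
      rw [h1, withDensity_one]
      have hfam : (fun i : Fin 1 => pifil i.val) = fun _ : Fin 1 => pifil 0 := by
        funext i
        have h0 : i = 0 := Subsingleton.elim _ _
        rw [h0]
        rfl
      rw [hfam]
      haveI := hpifprob 0
      haveI := hQprob 0
      have hmp := MeasureTheory.measurePreserving_funUnique (pifil 0) (Fin 1)
      have h2 : Measure.pi (fun _ : Fin 1 => pifil 0)
          = (pifil 0).map (MeasurableEquiv.funUnique (Fin 1) E).symm := by
        conv_rhs => rw [← hmp.map_eq]
        exact (MeasurableEquiv.map_symm_map _).symm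
      rw [h2, hpifil 0]
      have h3 : (fun u : Fin 1 → E => u (Fin.last 0)) = ⇑(MeasurableEquiv.funUnique (Fin 1) E) := by
        funext u
        exact congrArg u (Subsingleton.elim _ _)
      rw [h3, MeasurableEquiv.map_symm_map]
  | succ k ih =>
      haveI := hpifprob k
      haveI := hQprob k
      haveI := hQprob (k + 1)
      haveI hsfb : SigmaFinite (base k) := by
        rw [hbase k]
        haveI : ∀ i : Fin (k + 1), SigmaFinite
            ((fun i : Fin (k + 1) => if (i : ℕ) = 0 then η₀ else ν) i) := fun i => by
          dsimp only; split <;> infer_instance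
        infer_instance
      haveI hsf2 : ∀ i : Fin (k + 1 + 1), SigmaFinite
          ((fun i : Fin (k + 1 + 1) => if (i : ℕ) = 0 then η₀ else ν) i) := fun i => by
        dsimp only; split <;> infer_instance
      haveI hsf1 : ∀ i : Fin (k + 1), SigmaFinite
          ((fun i : Fin (k + 1) => if (i : ℕ) = 0 then η₀ else ν) i) := fun i => by
        dsimp only; split <;> infer_instance
      haveI hsfp : ∀ i : Fin (k + 1 + 1), SigmaFinite
          ((fun i : Fin (k + 1 + 1) => pifil (i : ℕ)) i) := fun i => by
        dsimp only
        haveI := hpifprob (i : ℕ)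
        infer_instance
      haveI hsfp' : ∀ i : Fin (k + 1), SigmaFinite
          ((fun i : Fin (k + 1) => pifil (i : ℕ)) i) := fun i => by
        dsimp only
        haveI := hpifprob (i : ℕ)
        infer_instance
      set e := MeasurableEquiv.piFinSuccAbove (fun _ : Fin (k + 1 + 1) => E) (Fin.last (k + 1))
        with he
      have hesymm : ∀ (x : E) (u : Fin (k + 1) → E), e.symm (x, u) = Fin.snoc u x := by
        intro x u
        rw [he]
        simp [MeasurableEquiv.piFinSuccAbove_symm_apply, Fin.insertNth_last', Fin.snocEquiv]
      have hpadle : ∀ (u : Fin (k + 1) → E) (x : E) (p : ℕ), p ≤ k →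
          pad ustar (k + 1) (Fin.snoc u x) p = pad ustar k u p := by
        intro u x p hp
        have h1 : p < k + 1 + 1 := by omega
        have h2 : p < k + 1 := by omega
        have h3 : (⟨p, h1⟩ : Fin (k + 1 + 1)) = Fin.castSucc ⟨p, h2⟩ := rfl
        simp only [pad, dif_pos h1, dif_pos h2, h3, Fin.snoc_castSucc]
      have hpadtopnew : ∀ (u : Fin (k + 1) → E) (x : E),
          pad ustar (k + 1) (Fin.snoc u x) (k + 1) = x := by
        intro u x
        have h1 : k + 1 < k + 1 + 1 := by omega
        have h3 : (⟨k + 1, h1⟩ : Fin (k + 1 + 1)) = Fin.last (k + 1) := rfl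
        simp only [pad, dif_pos h1, h3, Fin.snoc_last]
      have hpadtop : ∀ u : Fin (k + 1) → E, pad ustar k u k = u (Fin.last k) := by
        intro u
        have h2 : k < k + 1 := by omega
        simp only [pad, dif_pos h2]
        rfl
      set gm : E × (Fin (k + 1) → E) → ℝ≥0∞ := fun q =>
        ENNReal.ofReal (G (k + 1) (q.2 (Fin.last k)) q.1 * m (q.2 (Fin.last k)) q.1) with hgm
      have tpair : Measurable fun q : E × (Fin (k + 1) → E) => (q.2 (Fin.last k), q.1) :=
        ((measurable_pi_apply (Fin.last k)).comp measurable_snd).prodMk measurable_fst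
      have mgm : Measurable gm :=
        (((hGm (k + 1)).comp tpair).mul (hm.comp tpair)).ennreal_ofReal
      set ζ : E → ℝ≥0∞ := fun x =>
        ∫⁻ y, ENNReal.ofReal (G (k + 1) y x * m y x) ∂(pifil k) with hζ
      have hinner : Measurable fun q : E × E =>
          ENNReal.ofReal (G (k + 1) q.2 q.1 * m q.2 q.1) :=
        (((hGm (k + 1)).comp (measurable_snd.prodMk measurable_fst)).mul
          (hm.comp (measurable_snd.prodMk measurable_fst))).ennreal_ofReal
      have mζ : Measurable ζ := hinner.lintegral_prod_right'
      have hmeasy : ∀ x : E, Measurable fun y => G (k + 1) y x * m y x := fun x =>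
        ((hGm (k + 1)).comp (measurable_id.prodMk measurable_const)).mul
          (hm.comp (measurable_id.prodMk measurable_const))
      -- ζ is a.e. finite
      have hminner : Measurable fun q : E × E => ENNReal.ofReal (m q.2 q.1) :=
        (hm.comp (measurable_snd.prodMk measurable_fst)).ennreal_ofReal
      have hζle : ∫⁻ x, ζ x ∂ν ≤ ENNReal.ofReal Cg := by
        have hb : ∀ x, ζ x ≤ ENNReal.ofReal Cg *
            ∫⁻ y, ENNReal.ofReal (m y x) ∂(pifil k) := by
          intro x
          have tmx : Measurable fun y : E => ENNReal.ofReal (m y x) :=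
            (hm.comp (measurable_id.prodMk measurable_const)).ennreal_ofReal
          rw [← lintegral_const_mul _ tmx]
          refine lintegral_mono fun y => ?_
          rw [← ENNReal.ofReal_mul hCg0.le]
          exact ENNReal.ofReal_le_ofReal
            (mul_le_mul_of_nonneg_right (hCg _ _ _) (hmpos _ _).le)
        calc ∫⁻ x, ζ x ∂ν
            ≤ ∫⁻ x, ENNReal.ofReal Cg * ∫⁻ y, ENNReal.ofReal (m y x) ∂(pifil k) ∂ν :=
              lintegral_mono hb
          _ = ENNReal.ofReal Cg * ∫⁻ x, ∫⁻ y, ENNReal.ofReal (m y x) ∂(pifil k) ∂ν := by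
              rw [lintegral_const_mul _ hminner.lintegral_prod_right']
          _ = ENNReal.ofReal Cg * ∫⁻ y, ∫⁻ x, ENNReal.ofReal (m y x) ∂ν ∂(pifil k) := by
              rw [lintegral_lintegral_swap hminner.aemeasurable]
          _ = ENNReal.ofReal Cg := by
              rw [lintegral_congr hm1, lintegral_one, measure_univ, mul_one]
      have hζfin : ∀ᵐ x ∂ν, ζ x < ⊤ :=
        ae_lt_top mζ (lt_of_le_of_lt hζle ENNReal.ofReal_lt_top).ne
      have hζpos : ∀ x, 0 < ζ x := by
        intro x
        rw [hζ]
        rw [lintegral_pos_iff_support (hmeasy x).ennreal_ofReal]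
        have hsupp : Function.support
            (fun y => ENNReal.ofReal (G (k + 1) y x * m y x)) = Set.univ := by
          ext y
          simp only [Function.mem_support, Set.mem_univ, iff_true]
          exact (ENNReal.ofReal_pos.mpr (mul_pos (hGpos _ _ _) (hmpos _ _))).ne'
        rw [hsupp, measure_univ]
        exact zero_lt_one
      have hZae : ∀ᵐ x ∂ν, ENNReal.ofReal (Zden (k + 1) x) = ζ x ∧ 0 < Zden (k + 1) x := by
        filter_upwards [hζfin] with x hx
        have hnn : 0 ≤ᵐ[pifil k] fun y => G (k + 1) y x * m y x :=
          Filter.Eventually.of_forall fun y => (mul_pos (hGpos _ _ _) (hmpos _ _)).le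
        have hint : Integrable (fun y => G (k + 1) y x * m y x) (pifil k) := by
          refine ⟨(hmeasy x).aestronglyMeasurable, ?_⟩
          rw [hasFiniteIntegral_iff_ofReal hnn]
          exact hx
        have h1 : ENNReal.ofReal (Zden (k + 1) x) = ζ x := by
          rw [hZden (k + 1) x]
          rw [show (k + 1 : ℕ) - 1 = k from rfl]
          exact ofReal_integral_eq_lintegral_ofReal hint hnn
        exact ⟨h1, ENNReal.ofReal_pos.mp (h1 ▸ hζpos x)⟩
      -- base measure decomposition
      have hbase_succ : base (k + 1) = (ν.prod (base k)).map e.symm := by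
        rw [hbase (k + 1)]
        have hmp := measurePreserving_piFinSuccAbove
          (fun i : Fin (k + 1 + 1) => if (i : ℕ) = 0 then η₀ else ν) (Fin.last (k + 1))
        have h1 := hmp.map_eq
        simp only [Fin.succAbove_last, Fin.coe_castSucc, Fin.val_last,
          Nat.succ_ne_zero, if_false] at h1
        calc Measure.pi (fun i : Fin (k + 1 + 1) => if (i : ℕ) = 0 then η₀ else ν)
            = ((Measure.pi (fun i : Fin (k + 1 + 1) =>
                if (i : ℕ) = 0 then η₀ else ν)).map e).map e.symm :=
              (MeasurableEquiv.map_symm_map e).symm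
          _ = (ν.prod (base k)).map e.symm := by rw [h1, ← hbase k]
      -- density split for D
      have hDsucc : ∀ (u : Fin (k + 1) → E) (x : E),
          ENNReal.ofReal (D (k + 1) (Fin.snoc u x)) = ENNReal.ofReal (D k u) * gm (x, u) := by
        intro u x
        have hDs : D (k + 1) (Fin.snoc u x)
            = D k u * (G (k + 1) (u (Fin.last k)) x * m (u (Fin.last k)) x) := by
          rw [hD (k + 1) _, hD k u]
          simp only [hpe]
          rw [Finset.prod_range_succ, Finset.prod_Icc_succ_top (Nat.le_add_left 1 k)]
          have hG1 : ∀ p ∈ Finset.range (k + 1),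
              G p (if p = 0 then ustar else pad ustar (k + 1) (Fin.snoc u x) (p - 1))
                (pad ustar (k + 1) (Fin.snoc u x) p)
              = G p (if p = 0 then ustar else pad ustar k u (p - 1)) (pad ustar k u p) := by
            intro p hp
            rw [Finset.mem_range] at hp
            rw [hpadle u x p (by omega), hpadle u x (p - 1) (by omega)]
          have hm1' : ∀ p ∈ Finset.Icc 1 k,
              m (pad ustar (k + 1) (Fin.snoc u x) (p - 1))
                (pad ustar (k + 1) (Fin.snoc u x) p)
              = m (pad ustar k u (p - 1)) (pad ustar k u p) := by
            intro p hp
            rw [Finset.mem_Icc] at hp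
            rw [hpadle u x p (by omega), hpadle u x (p - 1) (by omega)]
          rw [Finset.prod_congr rfl hG1, Finset.prod_congr rfl hm1']
          rw [show (k + 1 : ℕ) - 1 = k from rfl]
          rw [hpadle u x k le_rfl, hpadtop, hpadtopnew]
          rw [if_neg (by omega : ¬ (k + 1 = 0))]
          ring
        rw [hDs, hgm, ENNReal.ofReal_mul' (mul_pos (hGpos _ _ _) (hmpos _ _)).le]
      -- Qraw recursion
      have hQraw_succ : Qraw (k + 1) = ((ν.prod (Qraw k)).withDensity gm).map e.symm := by
        rw [hQraw (k + 1), hbase_succ, wd_map_equiv]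
        congr 1
        have hfun : (fun a : E × (Fin (k + 1) → E) => ENNReal.ofReal (D (k + 1) (e.symm a)))
            = (fun a : E × (Fin (k + 1) → E) => ENNReal.ofReal (D k a.2)) * gm := by
          funext a
          show _ = ENNReal.ofReal (D k a.2) * gm a
          rw [show e.symm a = Fin.snoc a.2 a.1 from by rw [← hesymm a.1 a.2]]
          exact hDsucc a.2 a.1
        have hmDs : Measurable fun a : E × (Fin (k + 1) → E) => ENNReal.ofReal (D k a.2) :=
          (mD k).comp measurable_snd
        rw [hfun, withDensity_mul _ hmDs mgm]
        haveI : SigmaFinite ((base k).withDensity fun u => ENNReal.ofReal (D k u)) := by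
          rw [← hQraw k]; infer_instance
        rw [← prod_wd_snd ν (base k) (mD k), ← hQraw k]
      -- pushforward of Qraw k to the last coordinate
      have hmaplast : (Qraw k).map (fun u : Fin (k + 1) → E => u (Fin.last k))
          = Qraw k Set.univ • pifil k := by
        have h1 := hpifil k
        rw [hQ k, Measure.map_smul] at h1
        rw [h1, smul_smul, ENNReal.mul_inv_cancel (hc0 k) (hcT k), one_smul]
      -- the filter recursion
      have hpifil_succ : pifil (k + 1)
          = ((Qraw (k + 1) Set.univ)⁻¹ * Qraw k Set.univ) • ν.withDensity ζ := by
        rw [hpifil (k + 1), hQ (k + 1), Measure.map_smul, hQraw_succ,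
          Measure.map_map (measurable_pi_apply _) e.symm.measurable]
        have hcomp : ((fun u : Fin (k + 1 + 1) → E => u (Fin.last (k + 1))) ∘ e.symm)
            = Prod.fst := by
          funext q
          show (e.symm q) (Fin.last (k + 1)) = q.1
          rw [show e.symm q = Fin.snoc q.2 q.1 from by rw [← hesymm q.1 q.2], Fin.snoc_last]
        rw [hcomp, map_fst_wd _ _ mgm]
        have hin : (fun x => ∫⁻ u, gm (x, u) ∂(Qraw k)) = fun x => Qraw k Set.univ * ζ x := by
          funext x
          have h2 : ∫⁻ u, gm (x, u) ∂(Qraw k)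
              = ∫⁻ y, ENNReal.ofReal (G (k + 1) y x * m y x)
                  ∂((Qraw k).map (fun u : Fin (k + 1) → E => u (Fin.last k))) := by
            rw [lintegral_map (hmeasy x).ennreal_ofReal (measurable_pi_apply _)]
          rw [h2, hmaplast, lintegral_smul_measure, smul_eq_mul]
        rw [hin]
        have hcm : ν.withDensity (fun x => Qraw k Set.univ * ζ x)
            = Qraw k Set.univ • ν.withDensity ζ := withDensity_smul _ mζ
        rw [hcm, smul_smul]
      -- product-measure decomposition of the pi filter measure
      have hpi_succ : Measure.pi (fun i : Fin (k + 1 + 1) => pifil (i : ℕ))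
          = ((pifil (k + 1)).prod (Measure.pi fun i : Fin (k + 1) => pifil (i : ℕ))).map
            e.symm := by
        have hmp := measurePreserving_piFinSuccAbove
          (fun i : Fin (k + 1 + 1) => pifil (i : ℕ)) (Fin.last (k + 1))
        have h1 := hmp.map_eq
        simp only [Fin.succAbove_last, Fin.coe_castSucc, Fin.val_last] at h1
        calc Measure.pi (fun i : Fin (k + 1 + 1) => pifil (i : ℕ))
            = ((Measure.pi (fun i : Fin (k + 1 + 1) => pifil (i : ℕ))).map e).map e.symm :=
              (MeasurableEquiv.map_symm_map e).symm
          _ = _ := by rw [h1]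
      -- split of the backward density along snoc
      have hFsnoc : ∀ (u : Fin (k + 1) → E) (x : E),
          (∏ j ∈ Finset.Icc 1 (k + 1),
            G j (pad ustar (k + 1) (Fin.snoc u x) (j - 1)) (pad ustar (k + 1) (Fin.snoc u x) j)
              * m (pad ustar (k + 1) (Fin.snoc u x) (j - 1)) (pad ustar (k + 1) (Fin.snoc u x) j)
              / Zden j (pad ustar (k + 1) (Fin.snoc u x) j))
          = (∏ j ∈ Finset.Icc 1 k,
              G j (pad ustar k u (j - 1)) (pad ustar k u j)
                * m (pad ustar k u (j - 1)) (pad ustar k u j) / Zden j (pad ustar k u j))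
            * (G (k + 1) (u (Fin.last k)) x * m (u (Fin.last k)) x / Zden (k + 1) x) := by
        intro u x
        rw [Finset.prod_Icc_succ_top (Nat.le_add_left 1 k)]
        congr 1
        · refine Finset.prod_congr rfl fun p hp => ?_
          rw [Finset.mem_Icc] at hp
          rw [hpadle u x p (by omega), hpadle u x (p - 1) (by omega)]
        · rw [show (k + 1 : ℕ) - 1 = k from rfl, hpadle u x k le_rfl, hpadtop, hpadtopnew]
      set Pik := Measure.pi (fun i : Fin (k + 1) => pifil (i : ℕ)) with hPik
      set Fk : (Fin (k + 1) → E) → ℝ≥0∞ := fun u => ENNReal.ofReal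
        (∏ j ∈ Finset.Icc 1 k,
          G j (pad ustar k u (j - 1)) (pad ustar k u j)
            * m (pad ustar k u (j - 1)) (pad ustar k u j) / Zden j (pad ustar k u j)) with hFk
      set Fs : (Fin (k + 1 + 1) → E) → ℝ≥0∞ := fun u => ENNReal.ofReal
        (∏ j ∈ Finset.Icc 1 (k + 1),
          G j (pad ustar (k + 1) u (j - 1)) (pad ustar (k + 1) u j)
            * m (pad ustar (k + 1) u (j - 1)) (pad ustar (k + 1) u j)
            / Zden j (pad ustar (k + 1) u j)) with hFs
      have mFk : Measurable Fk := mF k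
      have mFs : Measurable Fs := mF (k + 1)
      haveI : IsProbabilityMeasure Pik := by
        rw [hPik]
        haveI : ∀ i : Fin (k + 1), IsProbabilityMeasure
            ((fun i : Fin (k + 1) => pifil (i : ℕ)) i) := fun i => hpifprob _
        infer_instance
      have hlift : ∀ᵐ p ∂(ν.prod Pik),
          ENNReal.ofReal (Zden (k + 1) p.1) = ζ p.1 ∧ 0 < Zden (k + 1) p.1 := by
        have hmem : MeasurableSet {x : E |
            ENNReal.ofReal (Zden (k + 1) x) = ζ x ∧ 0 < Zden (k + 1) x} := by
          refine MeasurableSet.inter ?_ ?_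
          · exact StronglyMeasurable.measurableSet_eq_fun ((mZ (k + 1)).ennreal_ofReal).stronglyMeasurable
              mζ.stronglyMeasurable
          · exact measurableSet_lt measurable_const (mZ (k + 1))
        have hmapfst : (ν.prod Pik).map Prod.fst = ν := by
          rw [Measure.map_fst_prod, measure_univ, one_smul]
        have h1 : ∀ᵐ x ∂((ν.prod Pik).map Prod.fst),
            ENNReal.ofReal (Zden (k + 1) x) = ζ x ∧ 0 < Zden (k + 1) x := by
          rw [hmapfst]; exact hZae
        exact (ae_map_iff measurable_fst.aemeasurable hmem).mp h1
      have hae : (fun p : E × (Fin (k + 1) → E) => ζ p.1 * Fs (e.symm p))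
          =ᵐ[ν.prod Pik] (fun p : E × (Fin (k + 1) → E) => Fk p.2 * gm p) := by
        filter_upwards [hlift] with p hp
        obtain ⟨hp1, hp2'⟩ := hp
        have hGmpos : (0:ℝ) < G (k + 1) (p.2 (Fin.last k)) p.1 * m (p.2 (Fin.last k)) p.1 :=
          mul_pos (hGpos _ _ _) (hmpos _ _)
        have hsnoc : e.symm p = Fin.snoc p.2 p.1 := by rw [← hesymm p.1 p.2]
        show ζ p.1 * Fs (e.symm p) = Fk p.2 * gm p
        rw [hsnoc, hFs]
        dsimp only
        rw [hFsnoc p.2 p.1, ENNReal.ofReal_mul' (div_nonneg hGmpos.le hp2'.le), ← hp1,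
          mul_left_comm, ← ENNReal.ofReal_mul hp2'.le,
          show Zden (k + 1) p.1 * (G (k + 1) (p.2 (Fin.last k)) p.1
              * m (p.2 (Fin.last k)) p.1 / Zden (k + 1) p.1)
            = G (k + 1) (p.2 (Fin.last k)) p.1 * m (p.2 (Fin.last k)) p.1 from by
            field_simp]
      haveI : IsProbabilityMeasure (Pik.withDensity Fk) := by rw [← ih]; infer_instance
      haveI : SFinite ((Qraw k Set.univ)⁻¹ • Qraw k) := by rw [← hQ k]; infer_instance
      have hmζf : Measurable fun p : E × (Fin (k + 1) → E) => ζ p.1 := mζ.comp measurable_fst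
      have hmFse : Measurable fun a : E × (Fin (k + 1) → E) => Fs (e.symm a) :=
        mFs.comp e.symm.measurable
      have hmFks : Measurable fun p : E × (Fin (k + 1) → E) => Fk p.2 :=
        mFk.comp measurable_snd
      have hae2 : ((fun p : E × (Fin (k + 1) → E) => ζ p.1) * fun a => Fs (e.symm a))
          =ᵐ[ν.prod Pik] ((fun p : E × (Fin (k + 1) → E) => Fk p.2) * gm) := hae
      have hsc : ((Qraw (k + 1) Set.univ)⁻¹ * Qraw k Set.univ) * (Qraw k Set.univ)⁻¹
          = (Qraw (k + 1) Set.univ)⁻¹ := by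
        rw [mul_assoc, ENNReal.mul_inv_cancel (hc0 k) (hcT k), mul_one]
      have hfinal : (Measure.pi fun i : Fin (k + 1 + 1) => pifil (i : ℕ)).withDensity Fs
          = Q (k + 1) := by
        rw [hpi_succ, wd_map_equiv, hpifil_succ, smul_prod_left, wd_fst_prod _ _ mζ,
          withDensity_smul_measure, ← withDensity_mul _ hmζf hmFse,
          withDensity_congr_ae hae2, withDensity_mul _ hmFks mgm,
          ← prod_wd_snd ν Pik mFk, ← ih, hQ k, smul_prod_right, withDensity_smul_measure,
          Measure.map_smul, Measure.map_smul, ← hQraw_succ, smul_smul, hsc,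
          ← hQ (k + 1)]
      exact hfinal.symm
end

section
/- Multilevel cost–variance optimization: suppose a multilevel estimator with levels l ∈ {0,...,L}, Δ_l = 2^{-l}, has MSE bound Σ_{l=0}^L Δ_l^β/N_l + Δ_L for β = 1 and per-level cost Σ_{l=0}^L N_l Δ_l^{-1}. Given ε > 0, choosing L so that Δ_L = ε² and N_l = ⌈ε^{-2} Δ_l^{1/2+ρ}⌉ for any fixed 0 < ρ < 1/2 yields MSE O(ε²) and total cost O(ε^{-4}), as ε → 0. -/
/-!
With `Δ_l = 2^{-l}` and `ε^{-2} Δ_l^{1/2+ρ} ≤ N_l ≤ ε^{-2} Δ_l^{1/2+ρ} + 1`, the `l`-th variance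
term `Δ_l / N_l` is at most `ε² Δ_l^{1/2-ρ} = ε² q^l` with `q = 2^{-(1/2-ρ)} < 1`, so the variance
sum is `O(ε²)`, and the bias `Δ_L` is at most `ε²` because `L ≥ log₂ ε^{-2}`. The `l`-th cost term
`N_l Δ_l^{-1}` is at most `ε^{-2} r^l + 2^l` with `r = 2^{1/2-ρ} ∈ (1, 2]`; both geometric sums are
dominated by a multiple of `2^L ≤ 2 ε^{-2}`, which gives cost `O(ε^{-4})`.
-/

open Real Finset

lemma le_pow_natCeil_logb {b y : ℝ} (hb : 1 < b) (hy : 0 < y) : y ≤ b ^ ⌈logb b y⌉₊ := by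
  rw [← rpow_natCast, ← logb_le_iff_le_rpow hb hy]
  exact Nat.le_ceil _

lemma pow_natCeil_logb_le {b y : ℝ} (hb : 1 < b) (hy : 1 ≤ y) : b ^ ⌈logb b y⌉₊ ≤ b * y := by
  have hlog : 0 ≤ logb b y := logb_nonneg hb hy
  calc b ^ ⌈logb b y⌉₊ = b ^ (⌈logb b y⌉₊ : ℝ) := (rpow_natCast b _).symm
    _ ≤ b ^ (1 + logb b y) := by
        gcongr
        · exact hb.le
        · linarith [Nat.ceil_lt_add_one hlog]
    _ = b * y := by
        rw [rpow_add (by linarith), rpow_one, rpow_logb (by linarith) hb.ne' (by linarith)]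

lemma geom_sum_le_inv_one_sub {q : ℝ} (hq0 : 0 ≤ q) (hq1 : q < 1) (n : ℕ) :
    ∑ i ∈ range n, q ^ i ≤ (1 - q)⁻¹ := by
  have := geom_sum_Ico_le_of_lt_one (m := 0) (n := n) hq0 hq1
  rwa [← range_eq_Ico, pow_zero, one_div] at this

lemma geom_sum_range_succ_le {r : ℝ} (hr : 1 < r) (n : ℕ) :
    ∑ i ∈ range (n + 1), r ^ i ≤ r / (r - 1) * r ^ n := by
  rw [geom_sum_eq hr.ne', div_mul_eq_mul_div, ← pow_succ']
  gcongr
  linarith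

lemma zpow_neg_natCast_rpow {x : ℝ} (hx : 0 < x) (l : ℕ) (t : ℝ) :
    (x ^ (-(l : ℤ))) ^ t = (x ^ (-t)) ^ l := by
  rw [← rpow_intCast, ← rpow_mul hx.le, ← rpow_mul_natCast hx.le]
  push_cast
  ring_nf

lemma div_natCeil_mul_rpow_le {c Δ : ℝ} (p : ℝ) (hc : 0 < c) (hΔ : 0 < Δ) :
    Δ / ⌈c * Δ ^ p⌉₊ ≤ c⁻¹ * Δ ^ (1 - p) := by
  have hN : c * Δ ^ p ≤ ⌈c * Δ ^ p⌉₊ := Nat.le_ceil _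
  have hpos : 0 < c * Δ ^ p := by positivity
  calc Δ / ⌈c * Δ ^ p⌉₊ ≤ Δ / (c * Δ ^ p) := by gcongr
    _ = c⁻¹ * Δ ^ (1 - p) := by
        rw [rpow_sub hΔ, rpow_one]; field_simp

lemma natCeil_mul_rpow_mul_inv_le {c Δ : ℝ} (p : ℝ) (hc : 0 ≤ c) (hΔ : 0 < Δ) :
    ⌈c * Δ ^ p⌉₊ * Δ⁻¹ ≤ c * Δ ^ (p - 1) + Δ⁻¹ := by
  have hN : (⌈c * Δ ^ p⌉₊ : ℝ) ≤ c * Δ ^ p + 1 := (Nat.ceil_lt_add_one (by positivity)).le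
  calc (⌈c * Δ ^ p⌉₊ : ℝ) * Δ⁻¹ ≤ (c * Δ ^ p + 1) * Δ⁻¹ := by gcongr
    _ = c * Δ ^ (p - 1) + Δ⁻¹ := by rw [rpow_sub hΔ, rpow_one]; ring

lemma mlmc_variance_sum_le {ρ c : ℝ} (hρ : ρ < 1 / 2) (hc : 0 < c) (L : ℕ) :
    ∑ l ∈ range (L + 1), (2 : ℝ) ^ (-(l : ℤ)) / ⌈c * ((2 : ℝ) ^ (-(l : ℤ))) ^ ((1 : ℝ) / 2 + ρ)⌉₊
      ≤ (1 - (2 : ℝ) ^ (-(1 / 2 - ρ)))⁻¹ * c⁻¹ := by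
  set q : ℝ := 2 ^ (-(1 / 2 - ρ))
  have hq1 : q < 1 := rpow_lt_one_of_one_lt_of_neg one_lt_two (by linarith)
  calc _ ≤ ∑ l ∈ range (L + 1), c⁻¹ * q ^ l := by
        refine sum_le_sum fun l _ => ?_
        have := div_natCeil_mul_rpow_le (1 / 2 + ρ) hc (zpow_pos two_pos (-(l : ℤ)))
        rwa [show 1 - (1 / 2 + ρ) = 1 / 2 - ρ by ring,
          zpow_neg_natCast_rpow two_pos l (1 / 2 - ρ)] at this
    _ = c⁻¹ * ∑ l ∈ range (L + 1), q ^ l := (mul_sum ..).symm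
    _ ≤ c⁻¹ * (1 - q)⁻¹ := by
        gcongr
        exact geom_sum_le_inv_one_sub (by positivity) hq1 _
    _ = (1 - q)⁻¹ * c⁻¹ := mul_comm ..

lemma mlmc_cost_sum_le {ρ c : ℝ} (hρ0 : -(1 / 2) ≤ ρ) (hρ : ρ < 1 / 2) (hc : 0 ≤ c) (L : ℕ) :
    ∑ l ∈ range (L + 1), (⌈c * ((2 : ℝ) ^ (-(l : ℤ))) ^ ((1 : ℝ) / 2 + ρ)⌉₊ : ℝ) * 2 ^ (l : ℤ)
      ≤ ((2 : ℝ) ^ (1 / 2 - ρ) / ((2 : ℝ) ^ (1 / 2 - ρ) - 1) * c + 2) * 2 ^ L := by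
  set r : ℝ := 2 ^ (1 / 2 - ρ)
  have hr1 : 1 < r := one_lt_rpow one_lt_two (by linarith)
  have hr2 : r ≤ 2 := calc
    r ≤ 2 ^ (1 : ℝ) := rpow_le_rpow_of_exponent_le one_le_two (by linarith)
    _ = 2 := rpow_one 2
  calc _ ≤ ∑ l ∈ range (L + 1), (c * r ^ l + 2 ^ l) := by
        refine sum_le_sum fun l _ => ?_
        have := natCeil_mul_rpow_mul_inv_le (1 / 2 + ρ) hc (zpow_pos two_pos (-(l : ℤ)))
        have h2l : ((2 : ℝ) ^ (-(l : ℤ)))⁻¹ = 2 ^ l := by rw [zpow_neg, inv_inv, zpow_natCast]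
        rw [zpow_natCast]
        rwa [show 1 / 2 + ρ - 1 = -(1 / 2 - ρ) by ring,
          zpow_neg_natCast_rpow two_pos l (-(1 / 2 - ρ)), neg_neg, h2l] at this
    _ = c * ∑ l ∈ range (L + 1), r ^ l + ∑ l ∈ range (L + 1), (2 : ℝ) ^ l := by
        rw [sum_add_distrib, mul_sum]
    _ ≤ c * (r / (r - 1) * r ^ L) + 2 / (2 - 1) * 2 ^ L := by
        gcongr
        · exact geom_sum_range_succ_le hr1 L
        · exact geom_sum_range_succ_le one_lt_two L
    _ ≤ c * (r / (r - 1) * 2 ^ L) + 2 / (2 - 1) * 2 ^ L := by gcongr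
    _ = (r / (r - 1) * c + 2) * 2 ^ L := by ring

/-- Multilevel cost–variance optimization (`β = 1`): with `Δ_l = 2^{-l}`,
`L = ⌈2 log₂(1/ε)⌉` (so `Δ_L ≍ ε²`) and `N_l = ⌈ε^{-2} Δ_l^{1/2+ρ}⌉` for fixed
`0 < ρ < 1/2`, the MSE bound `Σ_{l≤L} Δ_l/N_l + Δ_L` is `O(ε²)` and the cost
`Σ_{l≤L} N_l Δ_l^{-1}` is `O(ε^{-4})`, uniformly over `ε ∈ (0,1)`. -/
theorem stmt19 (ρ : ℝ) (hρ0 : 0 < ρ) (hρ : ρ < 1 / 2) :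
    ∃ C C' : ℝ, 0 < C ∧ 0 < C' ∧ ∀ ε : ℝ, 0 < ε → ε < 1 →
      ∀ L : ℕ, L = ⌈2 * Real.logb 2 (1 / ε)⌉₊ →
      ∀ N : ℕ → ℕ,
        (∀ l, N l = ⌈ε ^ (-2 : ℤ) * ((2 : ℝ) ^ (-(l : ℤ))) ^ ((1 : ℝ) / 2 + ρ)⌉₊) →
      ((∑ l ∈ Finset.range (L + 1), (2 : ℝ) ^ (-(l : ℤ)) / (N l : ℝ))
          + (2 : ℝ) ^ (-(L : ℤ)) ≤ C * ε ^ 2) ∧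
      ((∑ l ∈ Finset.range (L + 1), (N l : ℝ) * (2 : ℝ) ^ (l : ℤ)) ≤ C' * ε ^ (-4 : ℤ)) := by
  set q : ℝ := 2 ^ (-(1 / 2 - ρ))
  set r : ℝ := 2 ^ (1 / 2 - ρ)
  have hq1 : q < 1 := rpow_lt_one_of_one_lt_of_neg one_lt_two (by linarith)
  have hr1 : 1 < r := one_lt_rpow one_lt_two (by linarith)
  refine ⟨(1 - q)⁻¹ + 1, 2 * (r / (r - 1) + 2), add_pos (inv_pos.2 (by linarith)) one_pos,
    by have := div_pos (by linarith : 0 < r) (by linarith : 0 < r - 1); positivity, ?_⟩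
  intro ε hε0 hε1 L hL N hN
  obtain rfl : N = _ := funext hN
  set c : ℝ := ε ^ (-2 : ℤ) with hc
  have hc1 : 1 ≤ c := one_le_zpow_of_nonpos₀ hε0 hε1.le (by norm_num)
  have hcε : c⁻¹ = ε ^ 2 := by rw [hc, zpow_neg, inv_inv]; norm_cast
  replace hL : L = ⌈logb 2 c⌉₊ := by
    rw [hL, hc, ← inv_inv (ε ^ (-2 : ℤ)), hcε, ← inv_pow, ← one_div, logb_pow]
    norm_num
  have hΔL : (2 : ℝ) ^ (-(L : ℤ)) ≤ ε ^ 2 := by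
    rw [zpow_neg, zpow_natCast, ← hcε, hL]
    exact inv_anti₀ (by positivity) (le_pow_natCeil_logb one_lt_two (by positivity))
  have h2L : (2 : ℝ) ^ L ≤ 2 * c := hL ▸ pow_natCeil_logb_le one_lt_two hc1
  constructor
  · calc _ ≤ (1 - q)⁻¹ * c⁻¹ + ε ^ 2 :=
          add_le_add (mlmc_variance_sum_le hρ (by positivity) L) hΔL
      _ = ((1 - q)⁻¹ + 1) * ε ^ 2 := by rw [hcε]; ring
  · calc _ ≤ (r / (r - 1) * c + 2) * 2 ^ L :=
          mlmc_cost_sum_le (by linarith) hρ (by positivity) L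
      _ ≤ (r / (r - 1) * c + 2 * c) * (2 * c) := by gcongr; linarith
      _ = 2 * (r / (r - 1) + 2) * c ^ 2 := by ring
      _ = 2 * (r / (r - 1) + 2) * ε ^ (-4 : ℤ) := by rw [hc, ← zpow_natCast, ← zpow_mul]; norm_num
end
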